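/- arXiv:2006.03003 — 3 statements merged into one kernel-verified Lean document; each statement's English description precedes it below -/
import Mathlib

section
/- Up to a rational scalar, p_{2k+1} is the unique homogeneous polynomial p(x_1,x_2) of degree 2k+3 over ℚ satisfying: p(x_1,0)=p(0,x_2)=0, p(x_1,x_2)+p(x_2,x_1)=0, and, writing p(x_1,x_2)=x_1 x_2 (x_1−x_2) r(x_1,x_2) for a polynomial r, the conditions r(0,x)=2r(x,−x) and ∂²r/∂x_1² = ∂²r/∂x_2² hold. Concretely, any such p is a scalar multiple of x_1 x_2 (x_1−x_2)·((1−2^{2k+1})(x_1+x_2)^{2k} − (x_1−x_2)^{2k}). -/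
open MvPolynomial

/-!
Since `X 0 * X 1 * (X 0 - X 1)` is a nonzero cubic form, `r` is homogeneous of degree `2k`.
A homogeneous solution of the wave equation `∂₀² r = ∂₁² r` is a combination
`a (x₁ + x₂)^n + b (x₁ - x₂)^n`: the derivatives `∂₀ r ± ∂₁ r` solve the transport equations
`∂₁ g = ± ∂₀ g`, whose homogeneous solutions are powers of the linear forms `x₁ ± x₂`
(by Euler's identity and induction on the degree), and Euler's identity recovers `r` from them.
The condition `r(0, 1) = 2 r(1, -1)` then reads `a + b = 2^{2k+1} b`.
-/

namespace MvPolynomial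

section Homogeneous

variable {σ R : Type*} [CommSemiring R] {q r : MvPolynomial σ R} {a b : ℕ}

attribute [local instance] MvPolynomial.gradedAlgebra

lemma homogeneousComponent_mul_of_isHomogeneous_left (hq : q.IsHomogeneous a) (n : ℕ) :
    homogeneousComponent (a + n) (q * r) = q * homogeneousComponent n r := by
  rw [← decomposition.decompose'_apply, ← decomposition.decompose'_apply]
  exact DirectSum.coe_decompose_mul_add_of_left_mem _ ((mem_homogeneousSubmodule _ _).mpr hq)

lemma IsHomogeneous.of_mul_left [NoZeroDivisors R] (hq : q.IsHomogeneous a) (hq0 : q ≠ 0)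
    (hqr : (q * r).IsHomogeneous (a + b)) : r.IsHomogeneous b := by
  intro d hd
  have hcomp : homogeneousComponent d.degree r ≠ 0 := fun h => hd <| by
    simpa [coeff_homogeneousComponent] using congr(coeff d $h)
  have hprod : homogeneousComponent (a + d.degree) (q * r) ≠ 0 := by
    rw [homogeneousComponent_mul_of_isHomogeneous_left hq]
    exact mul_ne_zero hq0 hcomp
  rw [homogeneousComponent_of_mem hqr] at hprod
  have hdeg := (ite_ne_right_iff.mp hprod).1
  rw [Pi.one_def, ← Finsupp.degree_eq_weight_one]
  omega

end Homogeneous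

lemma pderiv_comm {σ R : Type*} [CommRing R] (i j : σ) (f : MvPolynomial σ R) :
    pderiv i (pderiv j f) = pderiv j (pderiv i f) := by
  have h : ⁅pderiv i, pderiv j⁆ = (0 : Derivation R (MvPolynomial σ R) (MvPolynomial σ R)) :=
    derivation_ext fun k => by
      classical
      rw [Derivation.commutator_apply, pderiv_X, pderiv_X, Derivation.zero_apply]
      simp [Pi.single_apply, apply_ite]
  have hf := congr($h f)
  rwa [Derivation.commutator_apply, Derivation.zero_apply, sub_eq_zero] at hf

lemma IsHomogeneous.X_zero_mul_pderiv_add_X_one_mul_pderiv {R : Type*} [CommSemiring R]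
    {g : MvPolynomial (Fin 2) R} {n : ℕ} (hg : g.IsHomogeneous n) :
    X 0 * pderiv 0 g + X 1 * pderiv 1 g = C (n : R) * g := by
  rw [← Fin.sum_univ_two (fun i => X i * pderiv i g), hg.sum_X_mul_pderiv, nsmul_eq_mul,
    map_natCast]

section TwoVariables

variable {K : Type*} [Field K] [CharZero K]

lemma IsHomogeneous.exists_eq_C_mul_pow_of_pderiv_one_eq (ε : K) {m : ℕ}
    {g : MvPolynomial (Fin 2) K} (hg : g.IsHomogeneous m)
    (hD : pderiv 1 g = C ε * pderiv 0 g) :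
    ∃ c : K, g = C c * (X 0 + C ε * X 1) ^ m := by
  induction m generalizing g with
  | zero =>
    refine ⟨coeff 0 g, ?_⟩
    rw [pow_zero, mul_one]
    exact (homogeneousComponent_eq_self hg).symm.trans (homogeneousComponent_zero g)
  | succ m ih =>
    obtain ⟨c, hc⟩ := ih (by simpa using hg.pderiv (i := 0))
      (by rw [pderiv_comm, hD, pderiv_C_mul])
    have hm : ((m : K) + 1) ≠ 0 := Nat.cast_add_one_ne_zero m
    refine ⟨c / (m + 1), mul_left_cancel₀ (C_ne_zero.mpr hm) ?_⟩
    rw [← mul_assoc, ← map_mul, mul_div_cancel₀ _ hm, ← Nat.cast_add_one,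
      ← hg.X_zero_mul_pderiv_add_X_one_mul_pderiv, hD, hc]
    ring

theorem IsHomogeneous.exists_eq_add_pow_add_sub_pow_of_pderiv_pderiv_eq
    {r : MvPolynomial (Fin 2) K} {n : ℕ} (hr : r.IsHomogeneous n)
    (hwave : pderiv 0 (pderiv 0 r) = pderiv 1 (pderiv 1 r)) :
    ∃ a b : K, r = C a * (X 0 + X 1) ^ n + C b * (X 0 - X 1) ^ n := by
  cases n with
  | zero =>
    refine ⟨coeff 0 r, 0, ?_⟩
    rw [pow_zero, mul_one, map_zero, zero_mul, add_zero]
    exact (homogeneousComponent_eq_self hr).symm.trans (homogeneousComponent_zero r)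
  | succ m =>
    have hr' (i : Fin 2) : (pderiv i r).IsHomogeneous m := by simpa using hr.pderiv
    obtain ⟨a, ha⟩ := ((hr' 0).add (hr' 1)).exists_eq_C_mul_pow_of_pderiv_one_eq 1
      (by rw [map_add, map_add, pderiv_comm 1 0, ← hwave, map_one, one_mul, add_comm])
    obtain ⟨b, hb⟩ := ((hr' 0).sub (hr' 1)).exists_eq_C_mul_pow_of_pderiv_one_eq (-1)
      (by rw [map_sub, map_sub, pderiv_comm 1 0, ← hwave, map_neg, map_one]; ring)
    simp only [map_one, one_mul, map_neg, neg_one_mul, ← sub_eq_add_neg] at ha hb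
    have hm : (2 * ((m : K) + 1)) ≠ 0 := mul_ne_zero two_ne_zero (Nat.cast_add_one_ne_zero m)
    refine ⟨a / (2 * (m + 1)), b / (2 * (m + 1)), mul_left_cancel₀ (C_ne_zero.mpr hm) ?_⟩
    rw [mul_add (C _), ← mul_assoc, ← mul_assoc, ← map_mul, ← map_mul, mul_div_cancel₀ _ hm,
      mul_div_cancel₀ _ hm]
    have heuler := hr.X_zero_mul_pderiv_add_X_one_mul_pderiv
    simp only [map_mul, map_add, map_natCast, map_one, map_ofNat, Nat.cast_add, Nat.cast_one]
      at heuler ⊢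
    -- `2 (X₀ ∂₀r + X₁ ∂₁r) = (X₀ + X₁)(∂₀r + ∂₁r) + (X₀ - X₁)(∂₀r - ∂₁r)`
    linear_combination (X 0 + X 1) * ha + (X 0 - X 1) * hb - 2 * heuler

end TwoVariables

end MvPolynomial

theorem generator_characterisation_general (k : ℕ) (hk : 1 ≤ k)
    (p r : MvPolynomial (Fin 2) ℚ)
    (hhom : p.IsHomogeneous (2 * k + 3))
    (hfac : p = X 0 * X 1 * (X 0 - X 1) * r)
    (hr : ∀ x : ℚ, eval ![0, x] r = 2 * eval ![x, -x] r)
    (hwave : pderiv 0 (pderiv 0 r) = pderiv 1 (pderiv 1 r)) :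
    ∃ c : ℚ, p = C c * (X 0 * X 1 * (X 0 - X 1) *
      (C (1 - 2 ^ (2 * k + 1)) * (X 0 + X 1) ^ (2 * k) - (X 0 - X 1) ^ (2 * k))) := by
  have hq : (X 0 * X 1 * (X 0 - X 1) : MvPolynomial (Fin 2) ℚ).IsHomogeneous 3 :=
    ((isHomogeneous_X ℚ 0).mul (isHomogeneous_X ℚ 1)).mul
      ((isHomogeneous_X ℚ 0).sub (isHomogeneous_X ℚ 1))
  have hq0 : (X 0 * X 1 * (X 0 - X 1) : MvPolynomial (Fin 2) ℚ) ≠ 0 := fun h => by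
    have h21 := congr(eval ![(2 : ℚ), 1] $h)
    norm_num at h21
  have hrhom : r.IsHomogeneous (2 * k) := hq.of_mul_left hq0 (by rwa [← hfac, add_comm])
  obtain ⟨a, b, hab⟩ := hrhom.exists_eq_add_pow_add_sub_pow_of_pderiv_pderiv_eq hwave
  have hr1 : a + b = 2 * (b * 2 ^ (2 * k)) := by
    have h1 := hr 1
    norm_num [hab, zero_pow (by omega : 2 * k ≠ 0), Even.neg_one_pow (even_two_mul k)] at h1
    exact h1
  obtain rfl : a = (2 ^ (2 * k + 1) - 1) * b := by linear_combination hr1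
  refine ⟨-b, ?_⟩
  rw [hfac, hab]
  simp only [map_neg, map_mul, map_sub, map_one, map_pow, map_ofNat]
  ring

/-- Characterisation of the block degree one generators: any homogeneous polynomial
`p(x_1,x_2)` of degree `2k+3` over `ℚ` with `p(x_1,0) = p(0,x_2) = 0`,
`p(x_1,x_2) + p(x_2,x_1) = 0`, which factors as `p = x_1 x_2 (x_1 − x_2) r` with
`r(0,x) = 2 r(x,−x)` and `∂²r/∂x_1² = ∂²r/∂x_2²`, is a rational scalar multiple of
`x_1 x_2 (x_1 − x_2)·((1 − 2^{2k+1})(x_1+x_2)^{2k} − (x_1−x_2)^{2k})`. -/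
theorem generator_characterisation (k : ℕ) (hk : 1 ≤ k)
    (p r : MvPolynomial (Fin 2) ℚ)
    (hhom : p.IsHomogeneous (2 * k + 3))
    (h10 : ∀ x : ℚ, eval ![x, 0] p = 0)
    (h01 : ∀ x : ℚ, eval ![0, x] p = 0)
    (hanti : ∀ x y : ℚ, eval ![x, y] p + eval ![y, x] p = 0)
    (hfac : p = X 0 * X 1 * (X 0 - X 1) * r)
    (hr : ∀ x : ℚ, eval ![0, x] r = 2 * eval ![x, -x] r)
    (hwave : pderiv 0 (pderiv 0 r) = pderiv 1 (pderiv 1 r)) :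
    ∃ c : ℚ, p = C c * (X 0 * X 1 * (X 0 - X 1) *
      (C (1 - 2 ^ (2 * k + 1)) * (X 0 + X 1) ^ (2 * k) - (X 0 - X 1) ^ (2 * k))) :=
  generator_characterisation_general k hk p r hhom hfac hr hwave
end

section
/- Let f ∈ ℚ[x_1,x_2] and g ∈ ℚ[x_1,…,x_n] and define (f∘g)(x_1,…,x_{n+1}) := Σ_{i=1}^{n} [f(x_i,x_{i+1})/(x_i−x_{i+1})] · ( g(x_1,…,x_i,x_{i+2},…,x_{n+1})/x_i − g(x_1,…,x_{i−1},x_{i+1},…,x_{n+1})/x_{i+1} ), assuming f(x,x) = 0 and f(x,0) = f(0,x) = 0 so that each term is a polynomial. If f(x_1,x_2) + f(x_2,x_1) = 0 and g satisfies the shuffle relations Σ_{σ ∈ Sh_{n,r}} g(x_{σ(1)},…,x_{σ(n)}) = 0 for all 1 ≤ r < n, then f∘g satisfies Σ_{σ ∈ Sh_{n+1,r}} (f∘g)(x_{σ(1)},…,x_{σ(n+1)}) = 0 for all 1 ≤ r < n+1. -/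
/-!
Expand `Σ_σ (f ∘ g)(x_σ)` as a sum over pairs `(σ, i)` of a shuffle and a position, and group
the pairs by the values `(a, b) = (σ i, σ (i + 1))` sitting at the adjacent positions `i, i + 1`.
If `a` and `b` lie in different blocks, `σ ↦ σ ∘ (i i+1)` is a bijection between the
`(a, b)`-group and the `(b, a)`-group, and by antisymmetry of `f` it negates each term.
If `a` and `b` lie in the same block, the shuffle condition forces `b = a + 1`; erasing the
position `i + 1` then identifies the group with the shuffles of `n` letters (with a shifted cut),
and both `g`-parts of the group sum become shuffle sums of `g`, which vanish.
So the group sums form an antisymmetric array, whose total is `0`.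
-/

open MvPolynomial

/-- `σ` is an `(r, n−r)`-shuffle permutation of `{1,…,n}` (0-based model: the first
group consists of the values `< r`, the second of the values `≥ r`): `σ⁻¹` is
increasing on each group of values. -/
def IsShuffle (n r : ℕ) (σ : Equiv.Perm (Fin n)) : Prop :=
  (∀ i j : Fin n, (i : ℕ) < (j : ℕ) → (j : ℕ) < r → σ⁻¹ i < σ⁻¹ j) ∧
  (∀ i j : Fin n, (i : ℕ) < (j : ℕ) → r ≤ (i : ℕ) → σ⁻¹ i < σ⁻¹ j)

instance (n r : ℕ) : DecidablePred (IsShuffle n r) := fun σ => by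
  unfold IsShuffle; infer_instance

/-- The operation `(f ∘ g)(x_1,…,x_{n+1})
 = Σ_{i=1}^{n} f(x_i,x_{i+1})/(x_i−x_{i+1}) ·
   ( g(x_1,…,x_i,x_{i+2},…,x_{n+1})/x_i − g(x_1,…,x_{i−1},x_{i+1},…,x_{n+1})/x_{i+1} )`,
evaluated at a point `x`. -/
noncomputable def fog {n : ℕ} (f : MvPolynomial (Fin 2) ℚ) (g : MvPolynomial (Fin n) ℚ)
    (x : Fin (n + 1) → ℚ) : ℚ :=
  ∑ i : Fin n,
    eval ![x i.castSucc, x i.succ] f / (x i.castSucc - x i.succ) *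
      (eval (x ∘ (i.succ).succAbove) g / x i.castSucc
        - eval (x ∘ (i.castSucc).succAbove) g / x i.succ)

open Finset Equiv

namespace Fin

variable {m : ℕ}

lemma swap_castSucc_succ_succAbove_succ (i j : Fin m) :
    swap i.castSucc i.succ (i.succ.succAbove j) = i.castSucc.succAbove j := by
  rcases lt_trichotomy j i with h | rfl | h
  · rw [succAbove_succ_of_le _ _ h.le, succAbove_castSucc_of_lt _ _ h,
      swap_apply_of_ne_of_ne] <;> simp [Fin.ext_iff] <;> omega
  · simp
  · rw [succAbove_succ_of_lt _ _ h, succAbove_castSucc_of_le _ _ h.le,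
      swap_apply_of_ne_of_ne] <;> simp [Fin.ext_iff] <;> omega

lemma swap_castSucc_succ_lt_swap {i : Fin m} {s t : Fin (m + 1)} (hst : s < t)
    (h : ¬(s = i.castSucc ∧ t = i.succ)) :
    swap i.castSucc i.succ s < swap i.castSucc i.succ t := by
  rw [swap_apply_def, swap_apply_def]
  split_ifs <;> simp only [Fin.ext_iff, Fin.lt_def, Fin.val_castSucc, Fin.val_succ] at * <;> omega

end Fin

/-- Erasing the value `c` from an `(r, N - r)`-shuffle leaves an `(erasedCut c r, …)`-shuffle. -/
def erasedCut {m : ℕ} (c : Fin (m + 1)) (r : ℕ) : ℕ := if (c : ℕ) < r then r - 1 else r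

lemma val_succAbove_lt_iff {m r : ℕ} (c : Fin (m + 1)) (u : Fin m) :
    (c.succAbove u : ℕ) < r ↔ (u : ℕ) < erasedCut c r := by
  unfold erasedCut
  rcases lt_or_ge u.castSucc c with h | h
  · rw [Fin.succAbove_of_castSucc_lt _ _ h, Fin.val_castSucc]
    rw [Fin.lt_def, Fin.val_castSucc] at h
    split_ifs <;> omega
  · rw [Fin.succAbove_of_le_castSucc _ _ h, Fin.val_succ]
    rw [Fin.le_def, Fin.val_castSucc] at h
    split_ifs <;> omega

section PermSuccAbove

variable {m : ℕ}

def permInsert (p c : Fin (m + 1)) (τ : Perm (Fin m)) : Perm (Fin (m + 1)) :=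
  (finSuccEquiv' p).trans (τ.optionCongr.trans (finSuccEquiv' c).symm)

def permErase (σ : Perm (Fin (m + 1))) (p : Fin (m + 1)) : Perm (Fin m) :=
  removeNone ((finSuccEquiv' p).symm.trans (σ.trans (finSuccEquiv' (σ p))))

@[simp]
lemma permInsert_apply_self (p c : Fin (m + 1)) (τ : Perm (Fin m)) : permInsert p c τ p = c := by
  simp [permInsert]

@[simp]
lemma permInsert_apply_succAbove (p c : Fin (m + 1)) (τ : Perm (Fin m)) (j : Fin m) :
    permInsert p c τ (p.succAbove j) = c.succAbove (τ j) := by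
  simp [permInsert]

lemma permInsert_inv_apply_succAbove (p c : Fin (m + 1)) (τ : Perm (Fin m)) (u : Fin m) :
    (permInsert p c τ)⁻¹ (c.succAbove u) = p.succAbove (τ⁻¹ u) := by
  rw [Perm.inv_eq_iff_eq, permInsert_apply_succAbove]
  simp

lemma succAbove_permErase (σ : Perm (Fin (m + 1))) (p : Fin (m + 1)) (j : Fin m) :
    (σ p).succAbove (permErase σ p j) = σ (p.succAbove j) := by
  obtain ⟨k, hk⟩ := Fin.exists_succAbove_eq (σ.injective.ne (p.succAbove_ne j))
  have h := removeNone_some ((finSuccEquiv' p).symm.trans (σ.trans (finSuccEquiv' (σ p))))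
    (x := j) ⟨k, by simp [← hk]⟩
  simp only [trans_apply, finSuccEquiv'_symm_some] at h
  exact (finSuccEquiv'_eq_some.1 h.symm).symm

lemma permErase_permInsert (p c : Fin (m + 1)) (τ : Perm (Fin m)) :
    permErase (permInsert p c τ) p = τ := by
  ext j : 1
  have h := succAbove_permErase (permInsert p c τ) p j
  rw [permInsert_apply_self, permInsert_apply_succAbove] at h
  exact Fin.succAbove_right_injective h

lemma permInsert_permErase (σ : Perm (Fin (m + 1))) (p : Fin (m + 1)) :
    permInsert p (σ p) (permErase σ p) = σ := by
  ext v : 1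
  cases v using Fin.succAboveCases p with
  | x => exact permInsert_apply_self _ _ _
  | p j => rw [permInsert_apply_succAbove, succAbove_permErase]

end PermSuccAbove

lemma isShuffle_iff {N r : ℕ} {σ : Perm (Fin N)} :
    IsShuffle N r σ ↔ ∀ u v : Fin N, u < v → ((u : ℕ) < r ↔ (v : ℕ) < r) → σ⁻¹ u < σ⁻¹ v := by
  constructor
  · rintro ⟨below, above⟩ u v huv hblock
    by_cases hv : (v : ℕ) < r
    · exact below u v huv hv
    · exact above u v huv (by omega)
  · intro h
    exact ⟨fun u v huv hv => h u v huv (by omega), fun u v huv hu => h u v huv (by omega)⟩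

lemma isShuffle_iff_permInsert {m r : ℕ} {p c : Fin (m + 1)} {τ : Perm (Fin m)} :
    IsShuffle m (erasedCut c r) τ ↔ ∀ u v : Fin m, c.succAbove u < c.succAbove v →
      ((c.succAbove u : ℕ) < r ↔ (c.succAbove v : ℕ) < r) →
      (permInsert p c τ)⁻¹ (c.succAbove u) < (permInsert p c τ)⁻¹ (c.succAbove v) := by
  simp only [isShuffle_iff, Fin.succAbove_lt_succAbove_iff, val_succAbove_lt_iff,
    permInsert_inv_apply_succAbove]

namespace IsShuffle

variable {n r : ℕ} {σ : Perm (Fin (n + 1))}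

lemma permErase (hσ : IsShuffle (n + 1) r σ) (p : Fin (n + 1)) :
    IsShuffle n (erasedCut (σ p) r) (permErase σ p) := by
  rw [← permInsert_permErase σ p] at hσ
  exact isShuffle_iff_permInsert.2 fun u v => isShuffle_iff.1 hσ _ _

lemma val_succ_eq (hσ : IsShuffle (n + 1) r σ) (i : Fin n)
    (hblock : ((σ i.castSucc : ℕ) < r ↔ (σ i.succ : ℕ) < r)) :
    (σ i.succ : ℕ) = σ i.castSucc + 1 := by
  rw [isShuffle_iff] at hσ
  have hi : i.castSucc < i.succ := Fin.castSucc_lt_succ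
  rcases lt_or_gt_of_ne (σ.injective.ne hi.ne) with hlt | hgt
  · -- otherwise the value `σ i + 1` would sit strictly between the positions `i` and `i + 1`
    by_contra hne
    rw [Fin.lt_def] at hlt
    obtain ⟨w, hw⟩ : ∃ w : Fin (n + 1), (w : ℕ) = σ i.castSucc + 1 := ⟨⟨_, by omega⟩, rfl⟩
    have h₁ := hσ (σ i.castSucc) w (by rw [Fin.lt_def]; omega) (by omega)
    have h₂ := hσ w (σ i.succ) (by rw [Fin.lt_def]; omega) (by omega)
    simp only [Perm.coe_inv, symm_apply_apply, Fin.lt_def, Fin.val_castSucc, Fin.val_succ]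
      at h₁ h₂
    omega
  · have := hσ _ _ hgt hblock.symm
    simp only [Perm.coe_inv, symm_apply_apply] at this
    exact absurd this hi.asymm

lemma mul_swap (hσ : IsShuffle (n + 1) r σ) (i : Fin n)
    (hblock : ¬((σ i.castSucc : ℕ) < r ↔ (σ i.succ : ℕ) < r)) :
    IsShuffle (n + 1) r (σ * swap i.castSucc i.succ) := by
  rw [isShuffle_iff] at hσ ⊢
  intro u v huv huvblock
  rw [mul_inv_rev, swap_inv, Perm.mul_apply, Perm.mul_apply]
  refine Fin.swap_castSucc_succ_lt_swap (hσ u v huv huvblock) ?_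
  rintro ⟨hu, hv⟩
  rw [Perm.inv_eq_iff_eq] at hu hv
  exact hblock (hu ▸ hv ▸ huvblock)

end IsShuffle

lemma isShuffle_permInsert {n r : ℕ} {τ : Perm (Fin n)} {a : Fin n}
    (hτ : IsShuffle n (erasedCut a.succ r) τ)
    (hblock : ((a.castSucc : ℕ) < r ↔ (a.succ : ℕ) < r)) :
    IsShuffle (n + 1) r (permInsert (τ⁻¹ a).succ a.succ τ) := by
  set i := τ⁻¹ a
  set σ := permInsert i.succ a.succ τ
  have hs : σ⁻¹ a.succ = i.succ := by
    rw [Perm.inv_eq_iff_eq]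
    exact (permInsert_apply_self _ _ _).symm
  have hcs : σ⁻¹ a.castSucc = i.castSucc := by
    rw [← Fin.succAbove_succ_self a, permInsert_inv_apply_succAbove, Fin.succAbove_succ_self]
  have off_succ : ∀ u v : Fin (n + 1), u ≠ a.succ → v ≠ a.succ → u < v →
      ((u : ℕ) < r ↔ (v : ℕ) < r) → σ⁻¹ u < σ⁻¹ v := by
    intro u v hu hv
    obtain ⟨u, rfl⟩ := Fin.exists_succAbove_eq hu
    obtain ⟨v, rfl⟩ := Fin.exists_succAbove_eq hv
    exact isShuffle_iff_permInsert.1 hτ u v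
  have ha : a.castSucc < a.succ := Fin.castSucc_lt_succ
  rw [isShuffle_iff]
  intro u v huv hb
  by_cases hu : u = a.succ
  · subst hu
    have h := off_succ a.castSucc v ha.ne huv.ne' (ha.trans huv) (hblock.trans hb)
    have hne : i.succ ≠ σ⁻¹ v := by
      rw [← hs]
      exact σ⁻¹.injective.ne huv.ne
    rw [hcs] at h
    rw [hs]
    exact (Fin.castSucc_lt_iff_succ_le.1 h).lt_of_ne hne
  by_cases hv : v = a.succ
  · subst hv
    rw [hs]
    rcases lt_or_eq_of_le (Fin.le_castSucc_iff.2 huv) with hlt | rfl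
    · have h := off_succ u _ hu ha.ne hlt (hb.trans hblock.symm)
      rw [hcs] at h
      exact h.trans Fin.castSucc_lt_succ
    · rw [hcs]
      exact Fin.castSucc_lt_succ
  · exact off_succ u v hu hv huv hb

def shuffleFiber (n r : ℕ) (a b : Fin (n + 1)) : Finset (Perm (Fin (n + 1)) × Fin n) :=
  univ.filter fun p => IsShuffle (n + 1) r p.1 ∧ p.1 p.2.castSucc = a ∧ p.1 p.2.succ = b

section ShuffleFiber

variable {n r : ℕ}

lemma mem_shuffleFiber {a b : Fin (n + 1)} {p : Perm (Fin (n + 1)) × Fin n} :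
    p ∈ shuffleFiber n r a b ↔
      IsShuffle (n + 1) r p.1 ∧ p.1 p.2.castSucc = a ∧ p.1 p.2.succ = b := by
  simp [shuffleFiber]

lemma comp_succ_succAbove_eq {σ : Perm (Fin (n + 1))} {i a : Fin n} (hs : σ i.succ = a.succ) :
    σ ∘ i.succ.succAbove = a.succ.succAbove ∘ permErase σ i.succ := by
  funext j
  rw [Function.comp_apply, Function.comp_apply, ← hs, succAbove_permErase]

lemma comp_castSucc_succAbove_eq {σ : Perm (Fin (n + 1))} {i a : Fin n}
    (hcs : σ i.castSucc = a.castSucc) (hs : σ i.succ = a.succ) :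
    σ ∘ i.castSucc.succAbove = a.castSucc.succAbove ∘ permErase σ i.succ := by
  funext j
  calc σ (i.castSucc.succAbove j)
      = (σ * swap i.castSucc i.succ) (i.succ.succAbove j) := by
        rw [Perm.mul_apply, Fin.swap_castSucc_succ_succAbove_succ]
    _ = swap a.castSucc a.succ (σ (i.succ.succAbove j)) := by
        rw [mul_swap_eq_swap_mul, hcs, hs, Perm.mul_apply]
    _ = a.castSucc.succAbove (permErase σ i.succ j) := by
        rw [← Function.comp_apply (f := σ), comp_succ_succAbove_eq hs, Function.comp_apply,
          Fin.swap_castSucc_succ_succAbove_succ]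

lemma sum_shuffleFiber_eq_sum_isShuffle {M : Type*} [AddCommMonoid M] (a : Fin n)
    (hblock : ((a.castSucc : ℕ) < r ↔ (a.succ : ℕ) < r))
    (Φ : (Fin n → Fin (n + 1)) → (Fin n → Fin (n + 1)) → M) :
    ∑ p ∈ shuffleFiber n r a.castSucc a.succ,
        Φ (p.1 ∘ p.2.succ.succAbove) (p.1 ∘ p.2.castSucc.succAbove)
      = ∑ τ ∈ univ.filter (IsShuffle n (erasedCut a.succ r)),
        Φ (a.succ.succAbove ∘ τ) (a.castSucc.succAbove ∘ τ) := by
  refine sum_nbij' (fun p => permErase p.1 p.2.succ)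
    (fun τ => (permInsert (τ⁻¹ a).succ a.succ τ, τ⁻¹ a)) ?_ ?_ ?_ ?_ ?_
  · rintro ⟨σ, i⟩ hp
    obtain ⟨hσ, -, hs⟩ := mem_shuffleFiber.1 hp
    simpa [hs] using hσ.permErase i.succ
  · intro τ hτ
    refine mem_shuffleFiber.2
      ⟨isShuffle_permInsert (mem_filter.1 hτ).2 hblock, ?_, permInsert_apply_self _ _ _⟩
    rw [← Fin.succAbove_succ_self, permInsert_apply_succAbove]
    simp
  · rintro ⟨σ, i⟩ hp
    obtain ⟨-, hcs, hs⟩ := mem_shuffleFiber.1 hp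
    have hi : (permErase σ i.succ)⁻¹ a = i := by
      rw [Perm.inv_eq_iff_eq]
      apply Fin.succAbove_right_injective (p := a.succ)
      rw [← Function.comp_apply (f := a.succ.succAbove), ← comp_succ_succAbove_eq hs,
        Function.comp_apply, Fin.succAbove_succ_self, Fin.succAbove_succ_self, hcs]
    simp only [hi, ← hs, permInsert_permErase]
  · intro τ _
    exact permErase_permInsert _ _ _
  · rintro ⟨σ, i⟩ hp
    obtain ⟨-, hcs, hs⟩ := mem_shuffleFiber.1 hp
    rw [comp_succ_succAbove_eq hs, comp_castSucc_succAbove_eq hcs hs]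

end ShuffleFiber

section FogTerm

variable {n : ℕ} (f : MvPolynomial (Fin 2) ℚ) (g : MvPolynomial (Fin n) ℚ)

noncomputable def fogTerm (x : Fin (n + 1) → ℚ) (i : Fin n) : ℚ :=
  eval ![x i.castSucc, x i.succ] f / (x i.castSucc - x i.succ) *
    (eval (x ∘ i.succ.succAbove) g / x i.castSucc - eval (x ∘ i.castSucc.succAbove) g / x i.succ)

variable {f g}

lemma fogTerm_comp_swap (hanti : ∀ a b : ℚ, eval ![a, b] f + eval ![b, a] f = 0)
    (x : Fin (n + 1) → ℚ) (i : Fin n) :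
    fogTerm f g (x ∘ swap i.castSucc i.succ) i = -fogTerm f g x i := by
  have h₁ : x ∘ swap i.castSucc i.succ ∘ i.succ.succAbove = x ∘ i.castSucc.succAbove := by
    funext j
    simp [Fin.swap_castSucc_succ_succAbove_succ]
  have h₂ : x ∘ swap i.castSucc i.succ ∘ i.castSucc.succAbove = x ∘ i.succ.succAbove := by
    funext j
    simp [← Fin.swap_castSucc_succ_succAbove_succ]
  have hf : eval ![x i.succ, x i.castSucc] f = -eval ![x i.castSucc, x i.succ] f :=
    eq_neg_of_add_eq_zero_left (hanti _ _)
  simp only [fogTerm, Function.comp_assoc, h₁, h₂, Function.comp_apply, swap_apply_left,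
    swap_apply_right, hf]
  rw [← neg_sub (x i.castSucc), neg_div_neg_eq]
  ring

variable {r : ℕ}

lemma sum_shuffleFiber_fogTerm_swap (hanti : ∀ a b : ℚ, eval ![a, b] f + eval ![b, a] f = 0)
    (x : Fin (n + 1) → ℚ) {a b : Fin (n + 1)} (hab : ¬((a : ℕ) < r ↔ (b : ℕ) < r)) :
    ∑ p ∈ shuffleFiber n r a b, fogTerm f g (x ∘ p.1) p.2
      = -∑ p ∈ shuffleFiber n r b a, fogTerm f g (x ∘ p.1) p.2 := by
  have swap_mem : ∀ {a b : Fin (n + 1)}, ¬((a : ℕ) < r ↔ (b : ℕ) < r) →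
      ∀ p ∈ shuffleFiber n r a b,
        (p.1 * swap p.2.castSucc p.2.succ, p.2) ∈ shuffleFiber n r b a := by
    rintro a b hab ⟨σ, i⟩ hp
    obtain ⟨hσ, hcs, hs⟩ := mem_shuffleFiber.1 hp
    refine mem_shuffleFiber.2 ⟨hσ.mul_swap i (hcs ▸ hs ▸ hab), ?_, ?_⟩ <;> simpa
  rw [← sum_neg_distrib]
  refine sum_nbij' (fun p => (p.1 * swap p.2.castSucc p.2.succ, p.2))
    (fun p => (p.1 * swap p.2.castSucc p.2.succ, p.2)) (swap_mem hab)
    (swap_mem fun h => hab h.symm) (fun p _ => Prod.ext (mul_swap_mul_self _ _ _) rfl)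
    (fun p _ => Prod.ext (mul_swap_mul_self _ _ _) rfl) fun p _ => ?_
  rw [Perm.coe_mul, ← Function.comp_assoc, fogTerm_comp_swap hanti, neg_neg]

lemma sum_shuffleFiber_fogTerm_eq_zero
    (hg : ∀ r : ℕ, 1 ≤ r → r < n → ∀ x : Fin n → ℚ,
      ∑ σ ∈ Finset.univ.filter (IsShuffle n r), eval (x ∘ σ) g = 0)
    (hr : 1 ≤ r) (hrn : r < n + 1) (x : Fin (n + 1) → ℚ) {a b : Fin (n + 1)}
    (hab : (a : ℕ) < r ↔ (b : ℕ) < r) :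
    ∑ p ∈ shuffleFiber n r a b, fogTerm f g (x ∘ p.1) p.2 = 0 := by
  by_cases hadj : ∃ c : Fin n, a = c.castSucc ∧ b = c.succ
  · obtain ⟨c, rfl, rfl⟩ := hadj
    have hcut : 1 ≤ erasedCut c.succ r ∧ erasedCut c.succ r < n := by
      simp only [Fin.val_castSucc, Fin.val_succ] at hab
      unfold erasedCut
      split_ifs with h <;> simp only [Fin.val_succ] at h <;> omega
    set C := eval ![x c.castSucc, x c.succ] f / (x c.castSucc - x c.succ)
    calc ∑ p ∈ shuffleFiber n r c.castSucc c.succ, fogTerm f g (x ∘ p.1) p.2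
        = ∑ p ∈ shuffleFiber n r c.castSucc c.succ,
            C * (eval (x ∘ (p.1 ∘ p.2.succ.succAbove)) g / x c.castSucc
              - eval (x ∘ (p.1 ∘ p.2.castSucc.succAbove)) g / x c.succ) := by
          refine sum_congr rfl fun p hp => ?_
          obtain ⟨-, hcs, hs⟩ := mem_shuffleFiber.1 hp
          simp only [fogTerm, Function.comp_apply, hcs, hs, C]
          rfl
      _ = ∑ τ ∈ univ.filter (IsShuffle n (erasedCut c.succ r)),
            C * (eval ((x ∘ c.succ.succAbove) ∘ τ) g / x c.castSucc
              - eval ((x ∘ c.castSucc.succAbove) ∘ τ) g / x c.succ) :=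
          sum_shuffleFiber_eq_sum_isShuffle c hab fun u v =>
            C * (eval (x ∘ u) g / x c.castSucc - eval (x ∘ v) g / x c.succ)
      _ = 0 := by
          rw [← mul_sum, sum_sub_distrib, ← sum_div, ← sum_div, hg _ hcut.1 hcut.2,
            hg _ hcut.1 hcut.2]
          simp
  · refine sum_eq_zero fun p hp => absurd ?_ hadj
    obtain ⟨hσ, rfl, rfl⟩ := mem_shuffleFiber.1 hp
    have hconsec := hσ.val_succ_eq p.2 hab
    exact ⟨⟨p.1 p.2.castSucc, by omega⟩, rfl, Fin.ext hconsec⟩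

end FogTerm

lemma sum_sum_eq_zero_of_antisymm {α R : Type*} [Fintype α] [NonAssocRing R] [NoZeroDivisors R]
    [CharZero R] {F : α → α → R} (hF : ∀ a b, F a b = -F b a) : ∑ a, ∑ b, F a b = 0 := by
  rw [← CharZero.eq_neg_self_iff]
  conv_rhs => rw [sum_comm]
  simp only [← sum_neg_distrib, ← hF]

lemma sum_fog_eq_sum_shuffleFiber {n r : ℕ} (f : MvPolynomial (Fin 2) ℚ)
    (g : MvPolynomial (Fin n) ℚ) (x : Fin (n + 1) → ℚ) :
    ∑ σ ∈ univ.filter (IsShuffle (n + 1) r), fog f g (x ∘ σ)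
      = ∑ a, ∑ b, ∑ p ∈ shuffleFiber n r a b, fogTerm f g (x ∘ p.1) p.2 := by
  have hprod : univ.filter (fun p : Perm (Fin (n + 1)) × Fin n => IsShuffle (n + 1) r p.1)
      = univ.filter (IsShuffle (n + 1) r) ×ˢ univ := by
    ext
    simp
  calc ∑ σ ∈ univ.filter (IsShuffle (n + 1) r), fog f g (x ∘ σ)
      = ∑ p ∈ univ.filter (fun p : Perm (Fin (n + 1)) × Fin n => IsShuffle (n + 1) r p.1),
          fogTerm f g (x ∘ p.1) p.2 := by
        rw [hprod, sum_product]
        rfl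
    _ = ∑ ab : Fin (n + 1) × Fin (n + 1),
          ∑ p ∈ univ.filter (fun p : Perm (Fin (n + 1)) × Fin n => IsShuffle (n + 1) r p.1)
            with (p.1 p.2.castSucc, p.1 p.2.succ) = ab, fogTerm f g (x ∘ p.1) p.2 :=
        (sum_fiberwise _ _ _).symm
    _ = _ := by
        rw [← Fintype.sum_prod_type']
        simp only [shuffleFiber, filter_filter, Prod.ext_iff]

theorem block_shuffle_step_general (n : ℕ)
    (f : MvPolynomial (Fin 2) ℚ) (g : MvPolynomial (Fin n) ℚ)
    (hanti : ∀ a b : ℚ, eval ![a, b] f + eval ![b, a] f = 0)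
    (hg : ∀ r : ℕ, 1 ≤ r → r < n → ∀ x : Fin n → ℚ,
      ∑ σ ∈ Finset.univ.filter (IsShuffle n r), eval (x ∘ σ) g = 0) :
    ∀ r : ℕ, 1 ≤ r → r < n + 1 → ∀ x : Fin (n + 1) → ℚ,
      Function.Injective x → (∀ i, x i ≠ 0) →
      ∑ σ ∈ Finset.univ.filter (IsShuffle (n + 1) r), fog f g (x ∘ σ) = 0 := by
  intro r hr hrn x _ _
  rw [sum_fog_eq_sum_shuffleFiber]
  refine sum_sum_eq_zero_of_antisymm fun a b => ?_
  by_cases hab : (a : ℕ) < r ↔ (b : ℕ) < r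
  · rw [sum_shuffleFiber_fogTerm_eq_zero hg hr hrn x hab,
      sum_shuffleFiber_fogTerm_eq_zero hg hr hrn x hab.symm, neg_zero]
  · exact sum_shuffleFiber_fogTerm_swap hanti x hab

/-- If `f(x,x) = f(x,0) = f(0,x) = 0`, `f` is antisymmetric, and `g` satisfies all the
shuffle relations `Σ_{σ ∈ Sh_{n,r}} g(x_{σ(1)},…,x_{σ(n)}) = 0` for `1 ≤ r < n`, then
`f ∘ g` satisfies all the shuffle relations `Σ_{σ ∈ Sh_{n+1,r}} (f∘g)(x_σ) = 0` for
`1 ≤ r < n+1` (at generic points, where all divisions are defined). -/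
theorem block_shuffle_step (n : ℕ) (hn : 1 ≤ n)
    (f : MvPolynomial (Fin 2) ℚ) (g : MvPolynomial (Fin n) ℚ)
    (hdiag : ∀ x : ℚ, eval ![x, x] f = 0)
    (hx0 : ∀ x : ℚ, eval ![x, 0] f = 0)
    (h0x : ∀ x : ℚ, eval ![0, x] f = 0)
    (hanti : ∀ a b : ℚ, eval ![a, b] f + eval ![b, a] f = 0)
    (hg : ∀ r : ℕ, 1 ≤ r → r < n → ∀ x : Fin n → ℚ,
      ∑ σ ∈ Finset.univ.filter (IsShuffle n r), eval (x ∘ σ) g = 0) :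
    ∀ r : ℕ, 1 ≤ r → r < n + 1 → ∀ x : Fin (n + 1) → ℚ,
      Function.Injective x → (∀ i, x i ≠ 0) →
      ∑ σ ∈ Finset.univ.filter (IsShuffle (n + 1) r), fog f g (x ∘ σ) = 0 :=
  block_shuffle_step_general n f g hanti hg
end

section
/- For each word w over {e_0,e_1} of length l and depth d (number of e_1's) whose block decomposition of e_0 w e_1 gives block lengths (d_1,…,d_n), the congruence d ≡ ⌈l/2⌉ + d_1 + d_3 + d_5 + ⋯ (mod 2) holds, where the sum is over block lengths with odd index. -/
/-!
An alternating block `b` with first letter `s` and last letter `e` satisfies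
`2 · #e₁(b) + 1 = |b| + s + e`. Write a word `v` ending in `e₁` as `v = b v'` with `b` its first
block: the last letter of `b` is the first letter of `v'`, and the odd-indexed block-length sums of
`v` and `v'` add up to `|v|`. Induction on the number of blocks then gives
`#e₁(v) + (d_1 + d_3 + ⋯) ≡ ⌊(|v| + s)/2⌋ + |v| (mod 2)` with `s` the first letter of `v`,
and the theorem is the case `v = e₀ w e₁`.
-/

/-- A word over the two-letter alphabet `{e_0, e_1}` (modelled as `Bool`, with
`e_0 = false`, `e_1 = true`) is *alternating* if it is non-empty and has no two
equal adjacent letters. -/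
def Alternating (l : List Bool) : Prop := l ≠ [] ∧ l.Chain' (· ≠ ·)

/-- `L` is the block decomposition of `w`: a factorization of `w` into alternating
words such that the last letter of each factor equals the first letter of the next. -/
def BlockDecomp (w : List Bool) (L : List (List Bool)) : Prop :=
  (∀ b ∈ L, Alternating b) ∧ L.flatten = w ∧
    L.Chain' (fun a b => a.getLast? = b.head?)

open Finset

section BlockSums

variable {α : Type*}

theorem sum_range_length_getD (L : List (List α)) :
    ∑ i ∈ range L.length, (L.getD i []).length = L.flatten.length := by
  induction L with
  | nil => rfl
  | cons b L ih =>
    simp only [List.length_cons, sum_range_succ', List.getD_cons_succ, List.getD_cons_zero, ih,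
      List.flatten_cons, List.length_append, add_comm]

/-- The paper's `d_1 + d_3 + d_5 + ⋯`; blocks are indexed from `0` here. -/
def oddBlockLengthSum (L : List (List α)) : ℕ :=
  ∑ i ∈ range L.length, if i % 2 = 0 then (L.getD i []).length else 0

theorem oddBlockLengthSum_cons_add (b : List α) (L : List (List α)) :
    oddBlockLengthSum (b :: L) + oddBlockLengthSum L = b.length + L.flatten.length := by
  rw [oddBlockLengthSum, oddBlockLengthSum, List.length_cons, sum_range_succ',
    ← sum_range_length_getD, add_right_comm, ← sum_add_distrib]
  simp only [List.getD_cons_succ, List.getD_cons_zero, Nat.zero_mod, if_true, add_comm b.length]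
  congr 1
  refine sum_congr rfl fun i _ => ?_
  split_ifs <;> omega

end BlockSums

theorem two_mul_count_true_add_one {b : List Bool} (hb : b.IsChain (· ≠ ·)) {s e : Bool}
    (hs : b.head? = some s) (he : b.getLast? = some e) :
    2 * b.count true + 1 = b.length + s.toNat + e.toNat := by
  induction b generalizing s with
  | nil => simp at hs
  | cons x t ih =>
    obtain rfl : x = s := by simpa using hs
    cases t with
    | nil =>
      obtain rfl : x = e := by simpa using he
      cases x <;> rfl
    | cons y t =>
      obtain ⟨hxy, ht⟩ := List.isChain_cons_cons.mp hb
      have := ih ht rfl (by rwa [List.getLast?_cons_cons] at he)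
      obtain rfl : y = !x := by cases x <;> cases y <;> simp_all
      simp only [List.count_cons, List.length_cons] at this ⊢
      cases x <;>
        simp only [Bool.not_true, Bool.not_false, BEq.rfl, beq_true, Bool.false_eq_true,
          ↓reduceIte, Bool.toNat_true, Bool.toNat_false, add_zero] at this ⊢ <;>
        omega

theorem count_true_flatten_add_oddBlockLengthSum_modEq {L : List (List Bool)}
    (hblocks : ∀ b ∈ L, Alternating b) (hchain : L.IsChain (fun a b => a.getLast? = b.head?))
    {s : Bool} (hs : L.flatten.head? = some s) (he : L.flatten.getLast? = some true) :
    L.flatten.count true + oddBlockLengthSum L ≡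
      (L.flatten.length + s.toNat) / 2 + L.flatten.length [MOD 2] := by
  induction L generalizing s with
  | nil => simp at hs
  | cons b L ih =>
    obtain ⟨hb_ne, hb_alt⟩ := hblocks b List.mem_cons_self
    have hsum := oddBlockLengthSum_cons_add b L
    rw [List.flatten_cons, List.head?_append_of_ne_nil _ hb_ne] at hs
    rw [List.flatten_cons] at he ⊢
    have hs_le := Bool.toNat_le s
    cases L with
    | nil =>
      simp only [List.flatten_nil, List.append_nil, List.length_nil] at he hsum ⊢
      have hcount := two_mul_count_true_add_one hb_alt hs he
      have hS : oddBlockLengthSum ([] : List (List Bool)) = 0 := rfl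
      rw [Bool.toNat_true] at hcount
      unfold Nat.ModEq
      omega
    | cons c L =>
      obtain ⟨e, hbe⟩ := Option.ne_none_iff_exists'.mp (List.getLast?_eq_none_iff.not.mpr hb_ne)
      obtain ⟨hbc, hchain'⟩ := List.isChain_cons_cons.mp hchain
      have hc_ne := (hblocks c (by simp)).1
      have hrest_ne : (c :: L).flatten ≠ [] := by simp [hc_ne]
      have hrest_head : (c :: L).flatten.head? = some e := by
        rw [List.flatten_cons, List.head?_append_of_ne_nil _ hc_ne, ← hbc, hbe]
      rw [List.getLast?_append_of_ne_nil _ hrest_ne] at he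
      have hrest := ih (fun x hx => hblocks x (List.mem_cons_of_mem b hx)) hchain' hrest_head he
      have hcount := two_mul_count_true_add_one hb_alt hs hbe
      have he_le := Bool.toNat_le e
      unfold Nat.ModEq at hrest ⊢
      rw [List.count_append, List.length_append]
      omega

/-- For a word `w` of length `l` and depth `d` (number of `e_1`'s), if the block
decomposition of `e_0 w e_1` has block lengths `(d_1, …, d_n)`, then
`d ≡ ⌈l/2⌉ + d_1 + d_3 + d_5 + ⋯ (mod 2)`, summing block lengths of odd index. -/
theorem depth_block_parity (w : List Bool) (L : List (List Bool))
    (hL : BlockDecomp (false :: (w ++ [true])) L) :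
    w.count true ≡
      (w.length + 1) / 2 +
        ∑ i ∈ Finset.range L.length, (if i % 2 = 0 then (L.getD i []).length else 0)
      [MOD 2] := by
  obtain ⟨hblocks, hflat, hchain⟩ := hL
  have key := count_true_flatten_add_oddBlockLengthSum_modEq hblocks hchain
    (by rw [hflat]; rfl) (by rw [hflat, ← List.cons_append, List.getLast?_concat])
  rw [hflat, List.count_cons, List.count_append, List.count_singleton_self] at key
  simp only [List.length_cons, List.length_append, List.length_nil, Bool.toNat_false, beq_true,
    Bool.false_eq_true, if_false, add_zero] at key
  change _ ≡ _ + oddBlockLengthSum L [MOD 2]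
  unfold Nat.ModEq at key ⊢
  obtain ⟨m, hm | hm⟩ := Nat.even_or_odd' w.length <;> omega
end
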